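/- arXiv:2403.01372 — 2 statements merged into one kernel-verified Lean document; each statement's English description precedes it below -/
import Mathlib

section
/- Let λ < −1, set ω = −(λ+1) > 0, let c₁ > 0, and let h(t) = c₁·ω·t^{ω+1} + t for t > 0. Then there is a unique α₁₇ > 0 with h(α₁₇) = ω. Let u : (0, α₁₇) → ℝ be a C² function with u'(α) = h(α)^{2m−1} · (ω^{2m} − h(α)^{2m})^{−(2m−1)/(2m)} for all α ∈ (0, α₁₇). Then: lim_{α→0⁺} u'(α) = 0, the limit lim_{α→0⁺} u''(α) exists in ℝ, and the principal curvatures satisfy lim_{α→0⁺} k₁(α) = lim_{α→0⁺} k₂(α) = −1/ω = 1/(λ+1); in particular k₁ and k₂ extend continuously to the rotation axis α = 0. Moreover k₁(α) + λ·k₂(α) = 1 holds on (0, α₁₇). -/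
/-
Write `σ = birkhoffSin m`, i.e. `σ(s) = s^(1/(2m-1)) (1 + s^(2m/(2m-1)))^(-1/(2m))` (which is
`s/√(1+s²)` for `m = 1`). Then `k₂ = -σ(u')/α` and `k₁ = -(σ ∘ u')'`, as
`birkhoffSinDeriv m = σ'`. The prescribed slope is exactly the one with `σ(u'(α)) = h(α)/ω`, so
`k₁ = -h'(α)/ω` and `k₂ = -h(α)/(αω)`; with `h(α) = c₁ω α^(ω+1) + α` both tend to `-1/ω` at
the axis, and `k₁ + λk₂ = 1` is the first-order equation `αh' - (ω+1)h = -ωα` satisfied by `h`.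
Finally `u'' = -k₁/σ'(u')`, and `1/σ'(s) ~ (2m-1) s^((2m-2)/(2m-1)) → 0` as `s → 0⁺` since
`m ≥ 2`.
-/

open Real Set Filter Topology

noncomputable def birkhoffSin (m s : ℝ) : ℝ :=
  (1 + s ^ (2 * m / (2 * m - 1))) ^ (-1 / (2 * m)) * s ^ (1 / (2 * m - 1))

noncomputable def birkhoffSinDeriv (m s : ℝ) : ℝ :=
  1 / (2 * m - 1) * (1 + s ^ (2 * m / (2 * m - 1))) ^ (-(2 * m + 1) / (2 * m)) *
    s ^ (-(2 * m - 2) / (2 * m - 1))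

theorem hasDerivAt_birkhoffSin {m s : ℝ} (hm : m ≠ 0) (hm' : 2 * m - 1 ≠ 0) (hs : 0 < s) :
    HasDerivAt (birkhoffSin m) (birkhoffSinDeriv m s) s := by
  unfold birkhoffSinDeriv
  set p := 2 * m / (2 * m - 1)
  set B := 1 + s ^ p with hBdef
  have hB : 0 < B := by positivity
  have hpow := ((Real.hasDerivAt_rpow_const (p := p) (Or.inl hs.ne')).const_add 1).rpow_const
    (p := -1 / (2 * m)) (Or.inl hB.ne')
  refine (hpow.mul (Real.hasDerivAt_rpow_const (p := 1 / (2 * m - 1)) (Or.inl hs.ne'))).congr_deriv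
    ?_
  set X := B ^ (-(2 * m + 1) / (2 * m))
  set Y := s ^ (-(2 * m - 2) / (2 * m - 1))
  have hB₁ : B ^ (-1 / (2 * m) - 1) = X := by congr 1; field_simp; ring
  have hB₂ : B ^ (-1 / (2 * m)) = X * B := by
    rw [← Real.rpow_add_one hB.ne']; congr 1; field_simp; ring
  have hs₁ : s ^ (1 / (2 * m - 1) - 1) = Y := by congr 1; field_simp; ring
  have hs₂ : s ^ (p - 1) * s ^ (1 / (2 * m - 1)) = Y * s ^ p := by
    rw [← Real.rpow_add hs, ← Real.rpow_add hs]; congr 1; field_simp; ring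
  have hp : p * (-1 / (2 * m)) = -(1 / (2 * m - 1)) := by simp only [p]; field_simp
  rw [hB₁, hB₂, hs₁]
  clear_value X Y B
  linear_combination (p * (-1 / (2 * m)) * X) * hs₂ + (X * Y * s ^ p) * hp +
    (X * Y / (2 * m - 1)) * hBdef

theorem birkhoffSinDeriv_pos {m s : ℝ} (hm : 1 < 2 * m) (hs : 0 < s) :
    0 < birkhoffSinDeriv m s := by
  have : 0 < 2 * m - 1 := by linarith
  unfold birkhoffSinDeriv
  positivity

theorem inv_birkhoffSinDeriv (m : ℝ) {s : ℝ} (hs : 0 < s) :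
    (birkhoffSinDeriv m s)⁻¹ =
      (2 * m - 1) * (1 + s ^ (2 * m / (2 * m - 1))) ^ ((2 * m + 1) / (2 * m)) *
        s ^ ((2 * m - 2) / (2 * m - 1)) := by
  have hB : 0 ≤ 1 + s ^ (2 * m / (2 * m - 1)) := by positivity
  rw [birkhoffSinDeriv, neg_div, neg_div, Real.rpow_neg hB, Real.rpow_neg hs.le]
  simp only [mul_inv, one_div, inv_inv]

theorem tendsto_inv_birkhoffSinDeriv_nhdsGT_zero {m : ℝ} (hm : 1 < m) :
    Tendsto (fun s => (birkhoffSinDeriv m s)⁻¹) (𝓝[>] 0) (𝓝 0) := by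
  have he : 0 < (2 * m - 2) / (2 * m - 1) := by apply div_pos <;> linarith
  have hcont : ContinuousAt (fun s : ℝ =>
      (2 * m - 1) * (1 + s ^ (2 * m / (2 * m - 1))) ^ ((2 * m + 1) / (2 * m)) *
        s ^ ((2 * m - 2) / (2 * m - 1))) 0 := by
    have hp : 0 ≤ 2 * m / (2 * m - 1) := by apply div_nonneg <;> linarith
    fun_prop (disch := first | exact Or.inr hp | exact Or.inr he.le | (left; positivity))
  have h0 := hcont.tendsto.mono_left (nhdsWithin_le_nhds (s := Ioi 0))
  rw [Real.zero_rpow he.ne', mul_zero] at h0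
  refine h0.congr' ?_
  filter_upwards [self_mem_nhdsWithin] with s hs
  exact (inv_birkhoffSinDeriv m hs).symm

noncomputable def principalCurvature₁ (m : ℝ) (u : ℝ → ℝ) (α : ℝ) : ℝ :=
  -(1 / (2 * m - 1)) * (1 + deriv u α ^ ((2 * m) / (2 * m - 1))) ^ (-(2 * m + 1) / (2 * m)) *
    deriv u α ^ (-(2 * m - 2) / (2 * m - 1)) * deriv (deriv u) α

noncomputable def principalCurvature₂ (m : ℝ) (u : ℝ → ℝ) (α : ℝ) : ℝ :=
  -(1 / α) * (1 + deriv u α ^ ((2 * m) / (2 * m - 1))) ^ (-(1 : ℝ) / (2 * m)) *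
    deriv u α ^ ((1 : ℝ) / (2 * m - 1))

theorem principalCurvature₁_eq (m : ℝ) (u : ℝ → ℝ) (α : ℝ) :
    principalCurvature₁ m u α = -(birkhoffSinDeriv m (deriv u α) * deriv (deriv u) α) := by
  unfold principalCurvature₁ birkhoffSinDeriv
  ring

theorem principalCurvature₂_eq (m : ℝ) (u : ℝ → ℝ) (α : ℝ) :
    principalCurvature₂ m u α = -birkhoffSin m (deriv u α) / α := by
  unfold principalCurvature₂ birkhoffSin
  ring

theorem birkhoffSinDeriv_mul_eq_of_eventuallyEq {m : ℝ} (hm : m ≠ 0) (hm' : 2 * m - 1 ≠ 0)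
    {f F : ℝ → ℝ} {f' F' x : ℝ} (hf : HasDerivAt f f' x) (hfx : 0 < f x)
    (hF : birkhoffSin m ∘ f =ᶠ[𝓝 x] F) (hF' : HasDerivAt F F' x) :
    birkhoffSinDeriv m (f x) * f' = F' :=
  (((hasDerivAt_birkhoffSin hm hm' hfx).comp x hf).congr_of_eventuallyEq hF.symm).unique hF'

noncomputable def profileSlope (m : ℕ) (ω H : ℝ) : ℝ :=
  H ^ (2 * m - 1) * (ω ^ (2 * m) - H ^ (2 * m)) ^ (-(2 * (m : ℝ) - 1) / (2 * (m : ℝ)))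

section profileSlope

variable {m : ℕ} {ω H : ℝ}

theorem profileSlope_pos (hm : 1 ≤ m) (hH : 0 < H) (hHω : H < ω) : 0 < profileSlope m ω H := by
  have : 0 < ω ^ (2 * m) - H ^ (2 * m) := sub_pos.mpr (pow_lt_pow_left₀ hHω hH.le (by omega))
  unfold profileSlope
  positivity

theorem profileSlope_rpow (hm : 1 ≤ m) (hH : 0 < H) (hHω : H < ω) (r : ℝ) :
    profileSlope m ω H ^ (r / (2 * m - 1)) =
      H ^ r * (ω ^ (2 * m) - H ^ (2 * m)) ^ (-r / (2 * m)) := by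
  have hA : 0 < ω ^ (2 * m) - H ^ (2 * m) := sub_pos.mpr (pow_lt_pow_left₀ hHω hH.le (by omega))
  have hq : (2 * m - 1 : ℝ) ≠ 0 := by
    have : (1 : ℝ) ≤ m := by exact_mod_cast hm
    linarith
  have hcast : ((2 * m - 1 : ℕ) : ℝ) = 2 * m - 1 := by
    rw [Nat.cast_sub (by omega)]; push_cast; ring
  rw [profileSlope, Real.mul_rpow (by positivity) (by positivity), ← Real.rpow_natCast,
    ← Real.rpow_mul hH.le, ← Real.rpow_mul hA.le, hcast]
  congr 2 <;> field_simp

theorem birkhoffSin_profileSlope (hm : 1 ≤ m) (hH : 0 < H) (hHω : H < ω) :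
    birkhoffSin m (profileSlope m ω H) = H / ω := by
  have hA : 0 < ω ^ (2 * m) - H ^ (2 * m) := sub_pos.mpr (pow_lt_pow_left₀ hHω hH.le (by omega))
  have hm₀ : (m : ℝ) ≠ 0 := by positivity
  have hω : 0 < ω := hH.trans hHω
  have hpow : ∀ x : ℝ, x ^ (2 * (m : ℝ)) = x ^ (2 * m) := fun x => by
    rw [← Real.rpow_natCast]; push_cast; rfl
  have hω' : (ω ^ (2 * m)) ^ (-1 / (2 * (m : ℝ))) = ω⁻¹ := by
    rw [← hpow, ← Real.rpow_mul hω.le, ← Real.rpow_neg_one]; congr 1; field_simp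
  rw [birkhoffSin, profileSlope_rpow hm hH hHω, profileSlope_rpow hm hH hHω, neg_div,
    div_self (by positivity), Real.rpow_neg hA.le, Real.rpow_one, Real.rpow_one, hpow]
  set A := ω ^ (2 * m) - H ^ (2 * m)
  rw [show 1 + H ^ (2 * m) * A⁻¹ = ω ^ (2 * m) / A by field_simp; ring,
    Real.div_rpow (by positivity) hA.le, hω']
  have : 0 < A ^ (-1 / (2 * (m : ℝ))) := by positivity
  field_simp

theorem tendsto_profileSlope_zero (hm : 1 ≤ m) (hω : ω ≠ 0) :
    Tendsto (profileSlope m ω) (𝓝 0) (𝓝 0) := by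
  have hcont : ContinuousAt (profileSlope m ω) 0 := by
    unfold profileSlope
    have h0 : ω ^ (2 * m) - (0 : ℝ) ^ (2 * m) ≠ 0 := by
      rw [zero_pow (by omega), sub_zero]; exact pow_ne_zero _ hω
    fun_prop (disch := exact Or.inl h0)
  simpa [profileSlope, zero_pow (show 2 * m - 1 ≠ 0 by omega)] using hcont.tendsto

end profileSlope

noncomputable def weingartenProfile (a ω t : ℝ) : ℝ := a * t ^ (ω + 1) + t

section weingartenProfile

variable {a ω : ℝ}

theorem weingartenProfile_zero (hω : ω + 1 ≠ 0) : weingartenProfile a ω 0 = 0 := by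
  simp [weingartenProfile, Real.zero_rpow hω]

theorem continuous_weingartenProfile (hω : 0 ≤ ω + 1) : Continuous (weingartenProfile a ω) :=
  (continuous_const.mul (Real.continuous_rpow_const hω)).add continuous_id

theorem strictMonoOn_weingartenProfile (ha : 0 ≤ a) (hω : 0 ≤ ω + 1) :
    StrictMonoOn (weingartenProfile a ω) (Ici 0) := by
  intro x hx y _ hxy
  have : x ^ (ω + 1) ≤ y ^ (ω + 1) := Real.rpow_le_rpow hx hxy.le hω
  unfold weingartenProfile
  nlinarith

theorem existsUnique_weingartenProfile_eq (ha : 0 ≤ a) (hω : 0 < ω + 1) {c : ℝ} (hc : 0 < c) :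
    ∃! t : ℝ, 0 < t ∧ weingartenProfile a ω t = c := by
  have hmem : c ∈ Icc (weingartenProfile a ω 0) (weingartenProfile a ω c) := by
    rw [weingartenProfile_zero hω.ne']
    exact ⟨hc.le, le_add_of_nonneg_left (by positivity)⟩
  obtain ⟨t, ht, htc⟩ := intermediate_value_Icc hc.le
    (continuous_weingartenProfile hω.le).continuousOn hmem
  have ht₀ : 0 < t := ht.1.lt_of_ne <| by
    rintro rfl
    rw [weingartenProfile_zero hω.ne'] at htc
    exact hc.ne htc
  refine ⟨t, ⟨ht₀, htc⟩, fun s ⟨hs, hsc⟩ => ?_⟩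
  exact (strictMonoOn_weingartenProfile ha hω.le).injOn hs.le ht₀.le (hsc.trans htc.symm)

theorem mapsTo_weingartenProfile_Ioo (ha : 0 ≤ a) (hω : 0 < ω + 1) (b : ℝ) :
    MapsTo (weingartenProfile a ω) (Ioo 0 b) (Ioo 0 (weingartenProfile a ω b)) := by
  intro t ht
  have hmono := strictMonoOn_weingartenProfile ha hω.le
  refine ⟨?_, hmono ht.1.le (ht.1.trans ht.2).le ht.2⟩
  simpa [weingartenProfile_zero hω.ne'] using hmono self_mem_Ici ht.1.le ht.1

theorem hasDerivAt_weingartenProfile {t : ℝ} (ht : 0 < t) :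
    HasDerivAt (weingartenProfile a ω) (a * (ω + 1) * t ^ ω + 1) t := by
  have h := ((Real.hasDerivAt_rpow_const (p := ω + 1) (Or.inl ht.ne')).const_mul a).add
    (hasDerivAt_id t)
  rw [add_sub_cancel_right] at h
  exact h.congr_deriv (by ring)

theorem weingartenProfile_div_self {t : ℝ} (ht : 0 < t) :
    weingartenProfile a ω t / t = a * t ^ ω + 1 := by
  rw [weingartenProfile, Real.rpow_add_one ht.ne']
  field_simp

theorem tendsto_const_mul_rpow_add_one (c : ℝ) (hω : 0 < ω) :
    Tendsto (fun t : ℝ => c * t ^ ω + 1) (𝓝 0) (𝓝 1) := by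
  have h := ((Real.continuousAt_rpow_const 0 ω (Or.inr hω.le)).tendsto.const_mul c).add_const 1
  rwa [Real.zero_rpow hω.ne', mul_zero, zero_add] at h

end weingartenProfile

section axisProfile

variable {m : ℕ} {a ω b : ℝ} {u : ℝ → ℝ}

theorem deriv_pos_of_eqOn_profileSlope (hm : 1 ≤ m)
    (hH : MapsTo (weingartenProfile a ω) (Ioo 0 b) (Ioo 0 ω))
    (hu' : EqOn (deriv u) (profileSlope m ω ∘ weingartenProfile a ω) (Ioo 0 b)) {α : ℝ}
    (hα : α ∈ Ioo 0 b) : 0 < deriv u α := by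
  rw [hu' hα]
  exact profileSlope_pos hm (hH hα).1 (hH hα).2

theorem birkhoffSin_deriv_of_eqOn_profileSlope (hm : 1 ≤ m)
    (hH : MapsTo (weingartenProfile a ω) (Ioo 0 b) (Ioo 0 ω))
    (hu' : EqOn (deriv u) (profileSlope m ω ∘ weingartenProfile a ω) (Ioo 0 b)) {α : ℝ}
    (hα : α ∈ Ioo 0 b) : birkhoffSin m (deriv u α) = weingartenProfile a ω α / ω := by
  rw [hu' hα]
  exact birkhoffSin_profileSlope hm (hH hα).1 (hH hα).2

theorem birkhoffSinDeriv_mul_deriv_deriv_of_eqOn_profileSlope (hm : 1 ≤ m)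
    (hH : MapsTo (weingartenProfile a ω) (Ioo 0 b) (Ioo 0 ω))
    (hu' : EqOn (deriv u) (profileSlope m ω ∘ weingartenProfile a ω) (Ioo 0 b))
    (hdiff : DifferentiableOn ℝ (deriv u) (Ioo 0 b)) {α : ℝ} (hα : α ∈ Ioo 0 b) :
    birkhoffSinDeriv m (deriv u α) * deriv (deriv u) α = (a * (ω + 1) * α ^ ω + 1) / ω := by
  have hm' : (1 : ℝ) ≤ m := by exact_mod_cast hm
  have hnhds : Ioo 0 b ∈ 𝓝 α := isOpen_Ioo.mem_nhds hα
  refine birkhoffSinDeriv_mul_eq_of_eventuallyEq (by positivity) (by linarith)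
    (hdiff.differentiableAt hnhds).hasDerivAt (deriv_pos_of_eqOn_profileSlope hm hH hu' hα) ?_
    ((hasDerivAt_weingartenProfile hα.1).div_const ω)
  filter_upwards [hnhds] with x hx
  exact birkhoffSin_deriv_of_eqOn_profileSlope hm hH hu' hx

theorem principalCurvature₁_of_eqOn_profileSlope (hm : 1 ≤ m)
    (hH : MapsTo (weingartenProfile a ω) (Ioo 0 b) (Ioo 0 ω))
    (hu' : EqOn (deriv u) (profileSlope m ω ∘ weingartenProfile a ω) (Ioo 0 b))
    (hdiff : DifferentiableOn ℝ (deriv u) (Ioo 0 b)) {α : ℝ} (hα : α ∈ Ioo 0 b) :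
    principalCurvature₁ m u α = -(a * (ω + 1) * α ^ ω + 1) / ω := by
  rw [principalCurvature₁_eq,
    birkhoffSinDeriv_mul_deriv_deriv_of_eqOn_profileSlope hm hH hu' hdiff hα, neg_div]

theorem principalCurvature₂_of_eqOn_profileSlope (hm : 1 ≤ m)
    (hH : MapsTo (weingartenProfile a ω) (Ioo 0 b) (Ioo 0 ω))
    (hu' : EqOn (deriv u) (profileSlope m ω ∘ weingartenProfile a ω) (Ioo 0 b)) {α : ℝ}
    (hα : α ∈ Ioo 0 b) : principalCurvature₂ m u α = -(a * α ^ ω + 1) / ω := by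
  rw [principalCurvature₂_eq, birkhoffSin_deriv_of_eqOn_profileSlope hm hH hu' hα,
    ← weingartenProfile_div_self hα.1]
  ring

theorem principalCurvature₁_add_mul_principalCurvature₂_of_eqOn_profileSlope (hm : 1 ≤ m)
    (hω : 0 < ω) (hH : MapsTo (weingartenProfile a ω) (Ioo 0 b) (Ioo 0 ω))
    (hu' : EqOn (deriv u) (profileSlope m ω ∘ weingartenProfile a ω) (Ioo 0 b))
    (hdiff : DifferentiableOn ℝ (deriv u) (Ioo 0 b)) {α : ℝ} (hα : α ∈ Ioo 0 b) :
    principalCurvature₁ m u α + -(ω + 1) * principalCurvature₂ m u α = 1 := by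
  rw [principalCurvature₁_of_eqOn_profileSlope hm hH hu' hdiff hα,
    principalCurvature₂_of_eqOn_profileSlope hm hH hu' hα]
  field_simp
  ring

theorem tendsto_deriv_of_eqOn_profileSlope (hm : 1 ≤ m) (hω : 0 < ω) (hb : 0 < b)
    (hH : MapsTo (weingartenProfile a ω) (Ioo 0 b) (Ioo 0 ω))
    (hu' : EqOn (deriv u) (profileSlope m ω ∘ weingartenProfile a ω) (Ioo 0 b)) :
    Tendsto (deriv u) (𝓝[>] 0) (𝓝[>] 0) := by
  have hI : Ioo 0 b ∈ 𝓝[>] (0 : ℝ) := Ioo_mem_nhdsGT hb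
  have hH₀ : Tendsto (weingartenProfile a ω) (𝓝[>] 0) (𝓝 0) := by
    have h := (continuous_weingartenProfile (a := a) (by linarith : 0 ≤ ω + 1)).tendsto 0
    rw [weingartenProfile_zero (by linarith)] at h
    exact h.mono_left nhdsWithin_le_nhds
  refine tendsto_nhdsWithin_iff.mpr ⟨?_, ?_⟩
  · exact ((tendsto_profileSlope_zero hm hω.ne').comp hH₀).congr'
      (eventuallyEq_of_mem hI hu').symm
  · filter_upwards [hI] with α hα using deriv_pos_of_eqOn_profileSlope hm hH hu' hα

theorem tendsto_deriv_deriv_of_eqOn_profileSlope (hm : 2 ≤ m) (hω : 0 < ω) (hb : 0 < b)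
    (hH : MapsTo (weingartenProfile a ω) (Ioo 0 b) (Ioo 0 ω))
    (hu' : EqOn (deriv u) (profileSlope m ω ∘ weingartenProfile a ω) (Ioo 0 b))
    (hdiff : DifferentiableOn ℝ (deriv u) (Ioo 0 b)) :
    Tendsto (deriv (deriv u)) (𝓝[>] 0) (𝓝 0) := by
  have hm₁ : 1 ≤ m := by omega
  have hm' : (1 : ℝ) < m := by exact_mod_cast hm
  have h := (((tendsto_const_mul_rpow_add_one (a * (ω + 1)) hω).mono_left
    nhdsWithin_le_nhds).div_const ω).mul
    ((tendsto_inv_birkhoffSinDeriv_nhdsGT_zero hm').comp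
      (tendsto_deriv_of_eqOn_profileSlope hm₁ hω hb hH hu'))
  rw [mul_zero] at h
  refine h.congr' ?_
  filter_upwards [Ioo_mem_nhdsGT hb] with α hα
  have hD := birkhoffSinDeriv_pos (m := m) (by linarith)
    (deriv_pos_of_eqOn_profileSlope hm₁ hH hu' hα)
  rw [Function.comp_apply,
    ← birkhoffSinDeriv_mul_deriv_deriv_of_eqOn_profileSlope hm₁ hH hu' hdiff hα]
  field_simp

theorem tendsto_principalCurvature₁_of_eqOn_profileSlope (hm : 1 ≤ m) (hω : 0 < ω)
    (hb : 0 < b)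
    (hH : MapsTo (weingartenProfile a ω) (Ioo 0 b) (Ioo 0 ω))
    (hu' : EqOn (deriv u) (profileSlope m ω ∘ weingartenProfile a ω) (Ioo 0 b))
    (hdiff : DifferentiableOn ℝ (deriv u) (Ioo 0 b)) :
    Tendsto (principalCurvature₁ m u) (𝓝[>] 0) (𝓝 (-1 / ω)) := by
  have h := (((tendsto_const_mul_rpow_add_one (a * (ω + 1)) hω).mono_left
    (nhdsWithin_le_nhds (s := Ioi 0))).neg.div_const ω)
  refine h.congr' ?_
  filter_upwards [Ioo_mem_nhdsGT hb] with α hα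
  exact (principalCurvature₁_of_eqOn_profileSlope hm hH hu' hdiff hα).symm

theorem tendsto_principalCurvature₂_of_eqOn_profileSlope (hm : 1 ≤ m) (hω : 0 < ω)
    (hb : 0 < b)
    (hH : MapsTo (weingartenProfile a ω) (Ioo 0 b) (Ioo 0 ω))
    (hu' : EqOn (deriv u) (profileSlope m ω ∘ weingartenProfile a ω) (Ioo 0 b)) :
    Tendsto (principalCurvature₂ m u) (𝓝[>] 0) (𝓝 (-1 / ω)) := by
  have h := (((tendsto_const_mul_rpow_add_one a hω).mono_left
    (nhdsWithin_le_nhds (s := Ioi 0))).neg.div_const ω)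
  refine h.congr' ?_
  filter_upwards [Ioo_mem_nhdsGT hb] with α hα
  exact (principalCurvature₂_of_eqOn_profileSlope hm hH hu' hα).symm

end axisProfile

/-- Case `λ < −1`, `μ = 1`, `c₁ > 0` of the inhomogeneous linear Weingarten equation:
with `ω = −(λ+1) > 0` and `h(t) = c₁ ω t^{ω+1} + t`, there is a unique `α₁₇ > 0` with
`h(α₁₇) = ω`; for the corresponding profile `u` on `(0, α₁₇)` one has `u'(α) → 0` as
`α → 0⁺`, `u''` has a finite limit at `0⁺`, the principal curvatures `k₁` and `k₂`
extend continuously to the rotation axis with common limit `−1/ω = 1/(λ+1)`, and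
`k₁ + λk₂ = 1` holds on `(0, α₁₇)`. -/
theorem axis_smoothness_lambda_lt_neg_one (m : ℕ) (hm : 2 ≤ m) (lam : ℝ)
    (hlam : lam < -1) (ω : ℝ) (hω : ω = -(lam + 1)) (c₁ : ℝ) (hc₁ : 0 < c₁)
    (h : ℝ → ℝ) (hh : ∀ t, h t = c₁ * ω * t ^ (ω + 1) + t) :
    (∃! t : ℝ, 0 < t ∧ h t = ω) ∧
    (∀ α₁₇ : ℝ, 0 < α₁₇ → h α₁₇ = ω →
      ∀ u : ℝ → ℝ, ContDiffOn ℝ 2 u (Set.Ioo 0 α₁₇) →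
      (∀ α ∈ Set.Ioo (0 : ℝ) α₁₇, deriv u α =
        h α ^ (2 * m - 1) * (ω ^ (2 * m) - h α ^ (2 * m))
          ^ (-(2 * (m : ℝ) - 1) / (2 * (m : ℝ)))) →
      Filter.Tendsto (deriv u) (nhdsWithin 0 (Set.Ioi 0)) (nhds 0) ∧
      (∃ L : ℝ, Filter.Tendsto (deriv (deriv u)) (nhdsWithin 0 (Set.Ioi 0)) (nhds L)) ∧
      Filter.Tendsto (fun α =>
          -(1 / (2 * (m : ℝ) - 1)) *
            (1 + deriv u α ^ ((2 * (m : ℝ)) / (2 * (m : ℝ) - 1)))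
              ^ (-(2 * (m : ℝ) + 1) / (2 * (m : ℝ))) *
            deriv u α ^ (-(2 * (m : ℝ) - 2) / (2 * (m : ℝ) - 1)) *
            deriv (deriv u) α)
        (nhdsWithin 0 (Set.Ioi 0)) (nhds (1 / (lam + 1))) ∧
      Filter.Tendsto (fun α =>
          -(1 / α) * (1 + deriv u α ^ ((2 * (m : ℝ)) / (2 * (m : ℝ) - 1)))
              ^ (-(1 : ℝ) / (2 * (m : ℝ))) *
            deriv u α ^ ((1 : ℝ) / (2 * (m : ℝ) - 1)))
        (nhdsWithin 0 (Set.Ioi 0)) (nhds (1 / (lam + 1))) ∧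
      (∀ α ∈ Set.Ioo (0 : ℝ) α₁₇,
        (-(1 / (2 * (m : ℝ) - 1)) *
            (1 + deriv u α ^ ((2 * (m : ℝ)) / (2 * (m : ℝ) - 1)))
              ^ (-(2 * (m : ℝ) + 1) / (2 * (m : ℝ))) *
            deriv u α ^ (-(2 * (m : ℝ) - 2) / (2 * (m : ℝ) - 1)) *
            deriv (deriv u) α) +
          lam * (-(1 / α) * (1 + deriv u α ^ ((2 * (m : ℝ)) / (2 * (m : ℝ) - 1)))
              ^ (-(1 : ℝ) / (2 * (m : ℝ))) *
            deriv u α ^ ((1 : ℝ) / (2 * (m : ℝ) - 1))) = 1)) := by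
  have hω₀ : 0 < ω := by linarith
  have ha : 0 ≤ c₁ * ω := by positivity
  obtain rfl : h = weingartenProfile (c₁ * ω) ω := funext hh
  refine ⟨existsUnique_weingartenProfile_eq ha (by linarith) hω₀,
    fun b hb₀ hb u hu hu' => ?_⟩
  have hm₁ : 1 ≤ m := by omega
  have hH : MapsTo (weingartenProfile (c₁ * ω) ω) (Ioo 0 b) (Ioo 0 ω) :=
    (mapsTo_weingartenProfile_Ioo ha (by linarith) b).mono_right (by rw [hb])
  have hslope : EqOn (deriv u) (profileSlope m ω ∘ weingartenProfile (c₁ * ω) ω) (Ioo 0 b) :=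
    fun α hα => hu' α hα
  have hdiff : DifferentiableOn ℝ (deriv u) (Ioo 0 b) :=
    (hu.deriv_of_isOpen isOpen_Ioo (by norm_num)).differentiableOn one_ne_zero
  have hlam' : 1 / (lam + 1) = -1 / ω := by rw [hω, neg_div_neg_eq]
  rw [hlam']
  refine ⟨tendsto_nhds_of_tendsto_nhdsWithin
      (tendsto_deriv_of_eqOn_profileSlope hm₁ hω₀ hb₀ hH hslope),
    ⟨0, tendsto_deriv_deriv_of_eqOn_profileSlope hm hω₀ hb₀ hH hslope hdiff⟩,
    tendsto_principalCurvature₁_of_eqOn_profileSlope hm₁ hω₀ hb₀ hH hslope hdiff,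
    tendsto_principalCurvature₂_of_eqOn_profileSlope hm₁ hω₀ hb₀ hH hslope,
    fun α hα => ?_⟩
  have hlam : lam = -(ω + 1) := by rw [hω]; ring
  rw [hlam]
  exact principalCurvature₁_add_mul_principalCurvature₂_of_eqOn_profileSlope hm₁ hω₀ hH
    hslope hdiff hα
end

section
/- (Theorem 6.2) Let λ ∉ {0, −1} and μ ≠ 0, and for c₁ ∈ ℝ set P(α) = c₁ − (μ/(λ+1))·α^{λ+1}. The rotational surface with profile u satisfies k₁(α) + λ·k₂(α) = μ for all α ∈ I if and only if there exists a constant c₁ ∈ ℝ such that for all α ∈ I one has 0 < P(α) < α^{λ} and u'(α) = P(α)^{2m−1} · (α^{2mλ} − P(α)^{2m})^{−(2m−1)/(2m)}. -/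
/-!
Write `n = 2m` and `S(p) = p^{1/(n-1)} (1 + p^{n/(n-1)})^{-1/n}`. Then `k₂ = -S(u')/α` and
`k₁ = -S'(u') u''`, so `α^λ (k₁ + λ k₂) = -(α^λ S(u'))'`. Hence `k₁ + λ k₂ = μ` on the
interval if and only if `α^λ S(u'(α)) + μ/(λ+1) α^{λ+1}` is a constant `c₁`, that is,
`α^λ S(u'(α)) = P(α)`. Since `S(p)^n = t/(1+t)` with `t = p^{n/(n-1)}`, this equation can be
solved for `u'(α) > 0` exactly when `0 < P(α) < α^λ`, and the solution is the stated formula.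
-/

open Real Set

theorem IsOpen.exists_eq_const_iff_hasDerivAt_eq_zero {𝕜 G : Type*} [RCLike 𝕜]
    [NormedAddCommGroup G] [NormedSpace 𝕜 G] {s : Set 𝕜} {f f' : 𝕜 → G} (hs : IsOpen s)
    (hs' : IsPreconnected s) (hf : ∀ x ∈ s, HasDerivAt f (f' x) x) :
    (∃ c, ∀ x ∈ s, f x = c) ↔ ∀ x ∈ s, f' x = 0 := by
  constructor
  · rintro ⟨c, hc⟩ x hx
    have hconst : f =ᶠ[nhds x] fun _ => c := Filter.eventuallyEq_of_mem (hs.mem_nhds hx) hc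
    exact (hf x hx).unique ((hasDerivAt_const x c).congr_of_eventuallyEq hconst)
  · intro h
    refine hs.exists_is_const_of_deriv_eq_zero hs'
      (fun x hx => (hf x hx).differentiableAt.differentiableWithinAt) fun x hx => ?_
    rw [(hf x hx).deriv, h x hx, Pi.zero_apply]

theorem ContDiffOn.hasDerivAt_deriv {u : ℝ → ℝ} {s : Set ℝ} {x : ℝ} (hu : ContDiffOn ℝ 2 u s)
    (hs : IsOpen s) (hx : x ∈ s) : HasDerivAt (deriv u) (deriv (deriv u) x) x :=
  (((hu.deriv_of_isOpen hs (m := 1) (by norm_num)).differentiableOn one_ne_zero).differentiableAt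
    (hs.mem_nhds hx)).hasDerivAt

noncomputable section

def normalizedSlope (n p : ℝ) : ℝ := p ^ (1 / (n - 1)) * (1 + p ^ (n / (n - 1))) ^ (-1 / n)

/- With `n = 2m`, `meridianCurvature n (u' α) (u'' α)` and `parallelCurvature n α (u' α)` are the
principal curvatures `k₁(α)` and `k₂(α)`. -/
def meridianCurvature (n p p' : ℝ) : ℝ :=
  -(1 / (n - 1)) * (1 + p ^ (n / (n - 1))) ^ (-(n + 1) / n) * p ^ (-(n - 2) / (n - 1)) * p'

def parallelCurvature (n x p : ℝ) : ℝ :=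
  -(1 / x) * (1 + p ^ (n / (n - 1))) ^ (-1 / n) * p ^ (1 / (n - 1))

def weingartenFirstIntegral (n lam μ : ℝ) (q : ℝ → ℝ) (x : ℝ) : ℝ :=
  x ^ lam * normalizedSlope n (q x) + μ / (lam + 1) * x ^ (lam + 1)

variable {n p : ℝ}

theorem normalizedSlope_pos (hp : 0 < p) : 0 < normalizedSlope n p := by
  unfold normalizedSlope; positivity

theorem hasDerivAt_normalizedSlope (hn : 1 < n) (hp : 0 < p) :
    HasDerivAt (normalizedSlope n)
      (1 / (n - 1) * (1 + p ^ (n / (n - 1))) ^ (-(n + 1) / n) * p ^ (-(n - 2) / (n - 1))) p := by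
  have hn₀ : n ≠ 0 := by positivity
  have hn₁ : n - 1 ≠ 0 := sub_ne_zero.mpr hn.ne'
  have hT : 0 < 1 + p ^ (n / (n - 1)) := by positivity
  have h := (hasDerivAt_rpow_const (p := 1 / (n - 1)) (Or.inl hp.ne')).mul
    (((hasDerivAt_rpow_const (p := n / (n - 1)) (Or.inl hp.ne')).const_add 1).rpow_const
      (p := -1 / n) (Or.inl hT.ne'))
  refine h.congr_deriv ?_
  rw [show -(n + 1) / n = -1 / n - 1 by field_simp; ring,
    show -(n - 2) / (n - 1) = 1 / (n - 1) - 1 by field_simp; ring,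
    show n / (n - 1) - 1 = 1 / (n - 1) by field_simp; ring]
  set A := p ^ (1 / (n - 1) - 1)
  set t := p ^ (n / (n - 1)) with ht_def
  have hA : p ^ (1 / (n - 1)) = A * p := by rw [← rpow_add_one hp.ne', sub_add_cancel]
  have ht : t = A * p * p := by
    rw [← hA, ← rpow_add_one hp.ne', ht_def]; congr 1; field_simp; ring
  have hT₁ : (1 + t) ^ (-1 / n) = (1 + t) ^ (-1 / n - 1) * (1 + t) := by
    rw [← rpow_add_one hT.ne', sub_add_cancel]
  rw [hT₁, hA]
  generalize (1 + t) ^ (-1 / n - 1) = B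
  rw [ht]
  field_simp
  ring

theorem meridianCurvature_eq (hn : 1 < n) (hp : 0 < p) (p' : ℝ) :
    meridianCurvature n p p' = -(deriv (normalizedSlope n) p * p') := by
  rw [(hasDerivAt_normalizedSlope hn hp).deriv, meridianCurvature]; ring

theorem parallelCurvature_eq (x : ℝ) : parallelCurvature n x p = -(normalizedSlope n p / x) := by
  rw [parallelCurvature, normalizedSlope]; ring

theorem hasDerivAt_weingartenFirstIntegral {lam μ x q' : ℝ} {q : ℝ → ℝ} (hn : 1 < n)
    (hlam : lam ≠ -1) (hx : 0 < x) (hq : HasDerivAt q q' x) (hqx : 0 < q x) :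
    HasDerivAt (weingartenFirstIntegral n lam μ q)
      (x ^ lam * (μ - (meridianCurvature n (q x) q' + lam * parallelCurvature n x (q x)))) x := by
  have hlam₁ : lam + 1 ≠ 0 := by contrapose! hlam; linarith
  have hS := (hasDerivAt_normalizedSlope hn hqx).differentiableAt.hasDerivAt
  have h := ((hasDerivAt_rpow_const (p := lam) (Or.inl hx.ne')).mul (hS.comp x hq)).add
    ((hasDerivAt_rpow_const (p := lam + 1) (Or.inl hx.ne')).const_mul (μ / (lam + 1)))
  refine h.congr_deriv ?_
  rw [meridianCurvature_eq hn hqx, parallelCurvature_eq, add_sub_cancel_right,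
    rpow_sub_one hx.ne', Function.comp_apply]
  field_simp
  ring

theorem normalizedSlope_rpow (hn : 1 < n) (hp : 0 < p) :
    normalizedSlope n p ^ n = p ^ (n / (n - 1)) / (1 + p ^ (n / (n - 1))) := by
  have hn₀ : n ≠ 0 := by positivity
  rw [normalizedSlope, mul_rpow (by positivity) (by positivity), ← rpow_mul hp.le,
    ← rpow_mul (by positivity), one_div_mul_eq_div, div_mul_cancel₀ _ hn₀, rpow_neg_one]
  exact (div_eq_mul_inv _ _).symm

theorem normalizedSlope_lt_one (hn : 1 < n) (hp : 0 < p) : normalizedSlope n p < 1 := by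
  have hlt : normalizedSlope n p ^ n < 1 ^ n := by
    rw [normalizedSlope_rpow hn hp, one_rpow, div_lt_one (by positivity)]
    exact lt_one_add _
  exact (rpow_lt_rpow_iff (normalizedSlope_pos hp).le zero_le_one (by positivity)).mp hlt

theorem div_sub_rpow_rpow_eq {c P : ℝ} (hn : 0 < n) (hP : 0 < P) (hPc : P < c) :
    (P ^ n / (c ^ n - P ^ n)) ^ ((n - 1) / n) =
      P ^ (n - 1) * (c ^ n - P ^ n) ^ (-(n - 1) / n) := by
  have hD : 0 < c ^ n - P ^ n := sub_pos.mpr (rpow_lt_rpow hP.le hPc hn)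
  rw [div_rpow (by positivity) hD.le, ← rpow_mul hP.le, mul_div_cancel₀ _ hn.ne', neg_div,
    rpow_neg hD.le, div_eq_mul_inv]

theorem mul_normalizedSlope_eq_iff_of_lt {c P : ℝ} (hn : 1 < n) (hp : 0 < p) (hP : 0 < P)
    (hPc : P < c) :
    c * normalizedSlope n p = P ↔ p = P ^ (n - 1) * (c ^ n - P ^ n) ^ (-(n - 1) / n) := by
  have hn₀ : 0 < n := by linarith
  have hD : 0 < c ^ n - P ^ n := sub_pos.mpr (rpow_lt_rpow hP.le hPc hn₀)
  have hc : 0 < c := hP.trans hPc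
  have hS : 0 < normalizedSlope n p := normalizedSlope_pos hp
  have hT : 0 < 1 + p ^ (n / (n - 1)) := by positivity
  rw [← div_sub_rpow_rpow_eq hn₀ hP hPc, ← inv_div n,
    eq_rpow_inv hp.le (by positivity) (by positivity),
    ← rpow_left_inj (by positivity) hP.le hn₀.ne', mul_rpow hc.le hS.le,
    normalizedSlope_rpow hn hp, eq_div_iff hD.ne', mul_div_assoc', div_eq_iff hT.ne']
  constructor <;> intro h <;> linear_combination h

theorem mul_normalizedSlope_eq_iff {c : ℝ} (hn : 1 < n) (hc : 0 < c) (hp : 0 < p) (P : ℝ) :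
    c * normalizedSlope n p = P ↔
      0 < P ∧ P < c ∧ p = P ^ (n - 1) * (c ^ n - P ^ n) ^ (-(n - 1) / n) := by
  constructor
  · rintro rfl
    have hP : 0 < c * normalizedSlope n p := mul_pos hc (normalizedSlope_pos hp)
    have hPc : c * normalizedSlope n p < c :=
      mul_lt_of_lt_one_right hc (normalizedSlope_lt_one hn hp)
    exact ⟨hP, hPc, (mul_normalizedSlope_eq_iff_of_lt hn hp hP hPc).mp rfl⟩
  · rintro ⟨hP, hPc, h⟩
    exact (mul_normalizedSlope_eq_iff_of_lt hn hp hP hPc).mpr h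

end

theorem inhomogeneous_linear_Weingarten_iff_general (m : ℕ) (hm : 2 ≤ m)
    (a b : ℝ) (hI : Set.Ioo a b ⊆ Set.Ioi (0 : ℝ)) (u : ℝ → ℝ)
    (hu : ContDiffOn ℝ 2 u (Set.Ioo a b))
    (hu' : ∀ x ∈ Set.Ioo a b, 0 < deriv u x)
    (lam μ : ℝ) (hlam₁ : lam ≠ -1)
    (k₁ k₂ : ℝ → ℝ)
    (hk₁ : ∀ x, k₁ x =
      -(1 / (2 * (m : ℝ) - 1)) *
        (1 + deriv u x ^ ((2 * (m : ℝ)) / (2 * (m : ℝ) - 1)))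
          ^ (-(2 * (m : ℝ) + 1) / (2 * (m : ℝ))) *
        deriv u x ^ (-(2 * (m : ℝ) - 2) / (2 * (m : ℝ) - 1)) *
        deriv (deriv u) x)
    (hk₂ : ∀ x, k₂ x =
      -(1 / x) * (1 + deriv u x ^ ((2 * (m : ℝ)) / (2 * (m : ℝ) - 1)))
          ^ (-(1 : ℝ) / (2 * (m : ℝ))) *
        deriv u x ^ ((1 : ℝ) / (2 * (m : ℝ) - 1))) :
    (∀ x ∈ Set.Ioo a b, k₁ x + lam * k₂ x = μ) ↔
    ∃ c₁ : ℝ, ∀ x ∈ Set.Ioo a b,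
      0 < c₁ - μ / (lam + 1) * x ^ (lam + 1) ∧
      c₁ - μ / (lam + 1) * x ^ (lam + 1) < x ^ lam ∧
      deriv u x = (c₁ - μ / (lam + 1) * x ^ (lam + 1)) ^ (2 * m - 1) *
        (x ^ (2 * (m : ℝ) * lam) - (c₁ - μ / (lam + 1) * x ^ (lam + 1)) ^ (2 * m))
          ^ (-(2 * (m : ℝ) - 1) / (2 * (m : ℝ))) := by
  have hn : (1 : ℝ) < 2 * m := by norm_cast; omega
  have hG : ∀ x ∈ Ioo a b, HasDerivAt (weingartenFirstIntegral (2 * m) lam μ (deriv u))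
      (x ^ lam * (μ - (k₁ x + lam * k₂ x))) x := fun x hx => by
    rw [hk₁, hk₂]
    exact hasDerivAt_weingartenFirstIntegral hn hlam₁ (hI hx) (hu.hasDerivAt_deriv isOpen_Ioo hx)
      (hu' x hx)
  have hpow : ∀ P : ℝ, P ^ (2 * (m : ℝ)) = P ^ (2 * m) := fun P => by
    exact_mod_cast rpow_natCast P (2 * m)
  have hpow_sub : ∀ P : ℝ, P ^ (2 * (m : ℝ) - 1) = P ^ (2 * m - 1) := fun P => by
    rw [← rpow_natCast, Nat.cast_sub (by omega)]; push_cast; rfl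
  calc (∀ x ∈ Ioo a b, k₁ x + lam * k₂ x = μ)
      ↔ ∀ x ∈ Ioo a b, x ^ lam * (μ - (k₁ x + lam * k₂ x)) = 0 := forall₂_congr fun x hx => by
        rw [mul_eq_zero, sub_eq_zero, eq_comm, or_iff_right (rpow_pos_of_pos (hI hx) lam).ne']
    _ ↔ ∃ c, ∀ x ∈ Ioo a b, weingartenFirstIntegral (2 * m) lam μ (deriv u) x = c :=
      (isOpen_Ioo.exists_eq_const_iff_hasDerivAt_eq_zero isPreconnected_Ioo hG).symm
    _ ↔ _ := exists_congr fun c => forall₂_congr fun x hx => by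
      rw [weingartenFirstIntegral, ← eq_sub_iff_add_eq,
        mul_normalizedSlope_eq_iff hn (rpow_pos_of_pos (hI hx) lam) (hu' x hx),
        ← rpow_mul (hI hx).le, mul_comm lam, hpow, hpow_sub]

/-- (Theorem 6.2) For `λ ∉ {0, −1}` and `μ ≠ 0`, the rotational surface
`X(α,v) = (α cos v, α sin v, u(α))` satisfies `k₁ + λk₂ = μ` if and only if there is a
constant `c₁` such that, with `P(α) = c₁ − (μ/(λ+1)) α^{λ+1}`, one has
`0 < P(α) < α^{λ}` and `u'(α) = P(α)^{2m−1} (α^{2mλ} − P(α)^{2m})^{−(2m−1)/(2m)}`. -/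
theorem inhomogeneous_linear_Weingarten_iff (m : ℕ) (hm : 2 ≤ m)
    (a b : ℝ) (hI : Set.Ioo a b ⊆ Set.Ioi (0 : ℝ)) (u : ℝ → ℝ)
    (hu : ContDiffOn ℝ 2 u (Set.Ioo a b))
    (hu' : ∀ x ∈ Set.Ioo a b, 0 < deriv u x)
    (lam μ : ℝ) (hlam₀ : lam ≠ 0) (hlam₁ : lam ≠ -1) (hμ : μ ≠ 0)
    (k₁ k₂ : ℝ → ℝ)
    (hk₁ : ∀ x, k₁ x =
      -(1 / (2 * (m : ℝ) - 1)) *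
        (1 + deriv u x ^ ((2 * (m : ℝ)) / (2 * (m : ℝ) - 1)))
          ^ (-(2 * (m : ℝ) + 1) / (2 * (m : ℝ))) *
        deriv u x ^ (-(2 * (m : ℝ) - 2) / (2 * (m : ℝ) - 1)) *
        deriv (deriv u) x)
    (hk₂ : ∀ x, k₂ x =
      -(1 / x) * (1 + deriv u x ^ ((2 * (m : ℝ)) / (2 * (m : ℝ) - 1)))
          ^ (-(1 : ℝ) / (2 * (m : ℝ))) *
        deriv u x ^ ((1 : ℝ) / (2 * (m : ℝ) - 1))) :
    (∀ x ∈ Set.Ioo a b, k₁ x + lam * k₂ x = μ) ↔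
    ∃ c₁ : ℝ, ∀ x ∈ Set.Ioo a b,
      0 < c₁ - μ / (lam + 1) * x ^ (lam + 1) ∧
      c₁ - μ / (lam + 1) * x ^ (lam + 1) < x ^ lam ∧
      deriv u x = (c₁ - μ / (lam + 1) * x ^ (lam + 1)) ^ (2 * m - 1) *
        (x ^ (2 * (m : ℝ) * lam) - (c₁ - μ / (lam + 1) * x ^ (lam + 1)) ^ (2 * m))
          ^ (-(2 * (m : ℝ) - 1) / (2 * (m : ℝ))) :=
  inhomogeneous_linear_Weingarten_iff_general m hm a b hI u hu hu' lam μ hlam₁ k₁ k₂ hk₁ hk₂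
end
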